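/- Let c > 2, let K be a nonnegative integrable kernel with ∫_ℝ K = 1 and compact support, let β > 1 and b > 2β + 2. Write λ = λ(c) < μ = μ(c) for the positive roots of χ(z) = z² − cz + 1 = 0, and let φ₊ be a strictly increasing C² solution of φ₊'' − cφ₊' + g_β(φ₊) = 0 with limits 0 at −∞ and 2β at +∞. Choose ε ∈ (0, λ) with λ + ε < μ, assume L := sup_{t∈ℝ} φ₊(t)e^{−εt} < ∞, and let M > 0 satisfy −χ(λ + ε) > (L/M)∫_ℝ e^{−εs}K(s)ds. Define φ₋(t) = max{0, e^{λt}(1 − Me^{εt})} and let T_c be determined by Me^{εT_c} = 1, and assume 0 < φ₋(t) < φ₊(t) < e^{εt} < 1 for all t < T_c. Then every continuous φ : ℝ → ℝ with φ₋(t) ≤ φ(t) ≤ φ₊(t) for all t satisfies φ₋(t) ≤ (A_m φ)(t) ≤ φ₊(t) for all t ∈ ℝ. -/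

import Mathlib

/-!
`A_m` is the Green operator `G` of `ℒf = -f'' + cf' + bf`. Integrating
`(d/ds) e^{z(t-s)}((c - z) f(s) - f'(s)) = e^{z(t-s)} (ℒf)(s)` over `s ≤ t` with `z = z₁` and over
`s ≥ t` with `z = z₂` gives `G(ℒf) = f` whenever `f, f', f''` grow at `-∞` and `+∞` at
exponential rates strictly between `z₁` and `z₂`; and `G` is monotone, its kernel being positive.
So it suffices to compare `r(φ)` pointwise with `ℒφ₊` and with `ℒw`, `w(t) = e^{λt} - Me^{(λ+ε)t}`.

Above: `ℒφ₊ = bφ₊ + g_β(φ₊) ≥ bφ + g_β(φ) ≥ r(φ)`, as `g_β` is 1-Lipschitz, `b ≥ 1`, `K*φ ≥ 0`.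
Here `φ₊'` is `O(1)` at `-∞` and `O(e^{ct})` at `+∞`, with `c < z₂`, because `e^{-ct}(φ₊' - β/c)`
increases and `e^{-ct}φ₊'` decreases.

Below: `χ(λ) = 0` gives `ℒw = (b+1)w + Mχ(λ+ε)e^{(λ+ε)t}`. Where `w ≤ 0` this is `≤ 0 ≤ r(φ)`.
Where `w > 0` we have `t < T_c`, so `φ ≤ β` and `r(φ) = (b+1)φ - φ·(K*φ)`; then `w ≤ φ`,
`K*φ ≤ 2β ≤ b + 1` and `K*φ ≤ L(∫e^{-εs}K(s)ds) e^{εt} ≤ -Mχ(λ+ε) e^{εt}` give `ℒw ≤ r(φ)`.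
Hence `φ₋ = max(0, w) ≤ A_m φ`.
-/

open Filter MeasureTheory Real Set

noncomputable def conv (K φ : ℝ → ℝ) (t : ℝ) : ℝ := ∫ s, K s * φ (t - s)

noncomputable def gbeta (β u : ℝ) : ℝ := if u ≤ β then u else max 0 (2 * β - u)

noncomputable def zneg (c b : ℝ) : ℝ := (c - Real.sqrt (c ^ 2 + 4 * b)) / 2

noncomputable def zpos (c b : ℝ) : ℝ := (c + Real.sqrt (c ^ 2 + 4 * b)) / 2

noncomputable def rop (K : ℝ → ℝ) (β b : ℝ) (φ : ℝ → ℝ) (t : ℝ) : ℝ :=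
  b * φ t + gbeta β (φ t) * (1 - conv K φ t)

noncomputable def Am (K : ℝ → ℝ) (c β b : ℝ) (φ : ℝ → ℝ) (t : ℝ) : ℝ :=
  (1 / (zpos c b - zneg c b)) *
    ((∫ s in Iic t, Real.exp (zneg c b * (t - s)) * rop K β b φ s) +
     (∫ s in Ici t, Real.exp (zpos c b * (t - s)) * rop K β b φ s))

/-- `λ(c) = (c - √(c² - 4))/2`. -/
noncomputable def lam (c : ℝ) : ℝ := (c - Real.sqrt (c ^ 2 - 4)) / 2

/-- `μ(c) = (c + √(c² - 4))/2`. -/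
noncomputable def mup (c : ℝ) : ℝ := (c + Real.sqrt (c ^ 2 - 4)) / 2

/-- `χ(z) = z² - cz + 1`. -/
def chi (c z : ℝ) : ℝ := z ^ 2 - c * z + 1

open Asymptotics Topology

section Roots

variable {c b : ℝ}

lemma zneg_root (hcb : 0 ≤ c ^ 2 + 4 * b) : zneg c b ^ 2 - c * zneg c b - b = 0 := by
  unfold zneg
  linear_combination (1 / 4) * Real.sq_sqrt hcb

lemma zpos_root (hcb : 0 ≤ c ^ 2 + 4 * b) : zpos c b ^ 2 - c * zpos c b - b = 0 := by
  unfold zpos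
  linear_combination (1 / 4) * Real.sq_sqrt hcb

lemma zpos_sub_zneg : zpos c b - zneg c b = √(c ^ 2 + 4 * b) := by
  unfold zpos zneg; ring

lemma abs_lt_sqrt (hb : 0 < b) : |c| < √(c ^ 2 + 4 * b) := by
  rw [← Real.sqrt_sq_eq_abs]; exact Real.sqrt_lt_sqrt (sq_nonneg c) (by linarith)

lemma zneg_neg (hb : 0 < b) : zneg c b < 0 := by
  unfold zneg; linarith [le_abs_self c, abs_lt_sqrt (c := c) hb]

lemma lt_zpos (hb : 0 < b) : c < zpos c b := by
  unfold zpos; linarith [le_abs_self c, abs_lt_sqrt (c := c) hb]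

lemma zpos_pos (hb : 0 < b) : 0 < zpos c b := by
  unfold zpos; linarith [neg_abs_le c, abs_lt_sqrt (c := c) hb]

lemma mup_lt_zpos (hb : 0 < b) : mup c < zpos c b := by
  have : √(c ^ 2 - 4) < √(c ^ 2 + 4 * b) :=
    (Real.sqrt_lt_sqrt_iff_of_pos (by positivity)).2 (by linarith)
  unfold mup zpos; linarith

lemma chi_lam (hc : 2 ≤ c) : chi c (lam c) = 0 := by
  unfold chi lam
  linear_combination (1 / 4) * Real.sq_sqrt (show 0 ≤ c ^ 2 - 4 by nlinarith)

lemma lam_pos (hc : 0 < c) : 0 < lam c := by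
  have : √(c ^ 2 - 4) < c := (Real.sqrt_lt' hc).2 (by linarith)
  unfold lam; linarith

end Roots

structure HasExpGrowth (a₁ a₂ : ℝ) (f : ℝ → ℝ) : Prop where
  isBigO_atBot : f =O[atBot] fun s => exp (a₁ * s)
  isBigO_atTop : f =O[atTop] fun s => exp (a₂ * s)

namespace HasExpGrowth

variable {a₁ a₂ : ℝ} {f g : ℝ → ℝ}

lemma add (hf : HasExpGrowth a₁ a₂ f) (hg : HasExpGrowth a₁ a₂ g) :
    HasExpGrowth a₁ a₂ (fun s => f s + g s) :=
  ⟨hf.1.add hg.1, hf.2.add hg.2⟩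

lemma sub (hf : HasExpGrowth a₁ a₂ f) (hg : HasExpGrowth a₁ a₂ g) :
    HasExpGrowth a₁ a₂ (fun s => f s - g s) :=
  ⟨hf.1.sub hg.1, hf.2.sub hg.2⟩

lemma const_mul (hf : HasExpGrowth a₁ a₂ f) (k : ℝ) : HasExpGrowth a₁ a₂ (fun s => k * f s) :=
  ⟨hf.1.const_mul_left k, hf.2.const_mul_left k⟩

lemma mono {a₁' a₂' : ℝ} (hf : HasExpGrowth a₁ a₂ f) (h₁ : a₁' ≤ a₁) (h₂ : a₂ ≤ a₂') :
    HasExpGrowth a₁' a₂' f := by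
  refine ⟨hf.1.trans (IsBigO.of_bound 1 ?_), hf.2.trans (IsBigO.of_bound 1 ?_)⟩
  · filter_upwards [eventually_le_atBot 0] with s hs
    simp only [norm_eq_abs, abs_exp, one_mul, exp_le_exp]
    nlinarith
  · filter_upwards [eventually_ge_atTop 0] with s hs
    simp only [norm_eq_abs, abs_exp, one_mul, exp_le_exp]
    nlinarith

end HasExpGrowth

lemma hasExpGrowth_exp (k : ℝ) : HasExpGrowth k k (fun s => exp (k * s)) :=
  ⟨isBigO_refl _ _, isBigO_refl _ _⟩

lemma hasExpGrowth_of_abs_le {f : ℝ → ℝ} {C : ℝ} (hf : ∀ s, |f s| ≤ C) :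
    HasExpGrowth 0 0 f := by
  have : f =O[⊤] fun s => exp (0 * s) :=
    isBigO_of_le' ⊤ fun s => by simpa using hf s
  exact ⟨this.mono le_top, this.mono le_top⟩

section Decay

variable {l : Filter ℝ} {z a t : ℝ} {f : ℝ → ℝ}

lemma isBigO_exp_mul_sub_mul (hf : f =O[l] fun s => exp (a * s)) :
    (fun s => exp (z * (t - s)) * f s) =O[l] fun s => exp ((a - z) * s) := by
  refine ((isBigO_refl (fun s => exp (z * (t - s))) l).mul hf).trans ?_
  have : (fun s => exp (z * (t - s)) * exp (a * s)) = fun s => exp (z * t) * exp ((a - z) * s) := by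
    funext s; rw [← exp_add, ← exp_add]; ring_nf
  rw [this]
  exact (isBigO_refl _ _).const_mul_left _

lemma tendsto_exp_mul_sub_mul_atBot (hza : z < a) (hf : f =O[atBot] fun s => exp (a * s)) :
    Tendsto (fun s => exp (z * (t - s)) * f s) atBot (𝓝 0) :=
  (isBigO_exp_mul_sub_mul hf).trans_tendsto
    (tendsto_exp_atBot.comp (tendsto_id.const_mul_atBot (by linarith)))

lemma tendsto_exp_mul_sub_mul_atTop (hza : a < z) (hf : f =O[atTop] fun s => exp (a * s)) :
    Tendsto (fun s => exp (z * (t - s)) * f s) atTop (𝓝 0) :=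
  (isBigO_exp_mul_sub_mul hf).trans_tendsto
    (tendsto_exp_atBot.comp (tendsto_id.const_mul_atTop_of_neg (by linarith)))

lemma integrableOn_Iic_exp_mul_sub_mul (hf : Continuous f) (hza : z < a)
    (ho : f =O[atBot] fun s => exp (a * s)) :
    IntegrableOn (fun s => exp (z * (t - s)) * f s) (Iic t) :=
  ((by fun_prop : Continuous fun s => exp (z * (t - s)) * f s).continuousOn.locallyIntegrableOn
    measurableSet_Iic).integrableOn_of_isBigO_atBot (isBigO_exp_mul_sub_mul ho)
    ⟨Iic 0, Iic_mem_atBot 0, integrableOn_exp_mul_Iic (by linarith) 0⟩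

lemma integrableOn_Ici_exp_mul_sub_mul (hf : Continuous f) (hza : a < z)
    (ho : f =O[atTop] fun s => exp (a * s)) :
    IntegrableOn (fun s => exp (z * (t - s)) * f s) (Ici t) :=
  ((by fun_prop : Continuous fun s => exp (z * (t - s)) * f s).continuousOn.locallyIntegrableOn
    measurableSet_Ici).integrableOn_of_isBigO_atTop (isBigO_exp_mul_sub_mul ho)
    ⟨Ioi 0, Ioi_mem_atTop 0, integrableOn_exp_mul_Ioi (by linarith) 0⟩

end Decay

noncomputable def greenOp (c b : ℝ) (h : ℝ → ℝ) (t : ℝ) : ℝ :=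
  (1 / (zpos c b - zneg c b)) *
    ((∫ s in Iic t, exp (zneg c b * (t - s)) * h s) +
     (∫ s in Ici t, exp (zpos c b * (t - s)) * h s))

lemma Am_eq_greenOp (K : ℝ → ℝ) (c β b : ℝ) (φ : ℝ → ℝ) :
    Am K c β b φ = greenOp c b (rop K β b φ) := rfl

def GreenIntegrable (c b : ℝ) (h : ℝ → ℝ) : Prop :=
  ∀ t, IntegrableOn (fun s => exp (zneg c b * (t - s)) * h s) (Iic t) ∧
    IntegrableOn (fun s => exp (zpos c b * (t - s)) * h s) (Ici t)

section GreenOp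

variable {c b a₁ a₂ : ℝ} {h h₁ h₂ : ℝ → ℝ}

lemma HasExpGrowth.greenIntegrable (hg : HasExpGrowth a₁ a₂ h) (hc : Continuous h)
    (h₁ : zneg c b < a₁) (h₂ : a₂ < zpos c b) : GreenIntegrable c b h := fun _ =>
  ⟨integrableOn_Iic_exp_mul_sub_mul hc h₁ hg.1, integrableOn_Ici_exp_mul_sub_mul hc h₂ hg.2⟩

lemma greenOp_nonneg (hh : ∀ s, 0 ≤ h s) (t : ℝ) : 0 ≤ greenOp c b h t := by
  have : 0 ≤ zpos c b - zneg c b := zpos_sub_zneg ▸ Real.sqrt_nonneg _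
  unfold greenOp
  refine mul_nonneg (by positivity) (add_nonneg ?_ ?_) <;>
    exact setIntegral_nonneg (by measurability) fun s _ => mul_nonneg (exp_pos _).le (hh s)

lemma greenOp_mono (hi₁ : GreenIntegrable c b h₁) (hi₂ : GreenIntegrable c b h₂)
    (hle : ∀ s, h₁ s ≤ h₂ s) (t : ℝ) : greenOp c b h₁ t ≤ greenOp c b h₂ t := by
  have : 0 ≤ zpos c b - zneg c b := zpos_sub_zneg ▸ Real.sqrt_nonneg _
  unfold greenOp
  gcongr ?_ * (?_ + ?_)
  · exact setIntegral_mono_on (hi₁ t).1 (hi₂ t).1 measurableSet_Iic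
      fun s _ => mul_le_mul_of_nonneg_left (hle s) (exp_pos _).le
  · exact setIntegral_mono_on (hi₁ t).2 (hi₂ t).2 measurableSet_Ici
      fun s _ => mul_le_mul_of_nonneg_left (hle s) (exp_pos _).le

end GreenOp

section Green

variable {b c z a₁ a₂ s t : ℝ} {f f' f'' : ℝ → ℝ}

lemma hasDerivAt_green_primitive (hz : z ^ 2 - c * z - b = 0) (hf : HasDerivAt f (f' s) s)
    (hf' : HasDerivAt f' (f'' s) s) :
    HasDerivAt (fun u => exp (z * (t - u)) * ((c - z) * f u - f' u))
      (exp (z * (t - s)) * (b * f s + c * f' s - f'' s)) s := by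
  have he : HasDerivAt (fun u => exp (z * (t - u))) (exp (z * (t - s)) * (-z)) s := by
    simpa using ((hasDerivAt_id s).const_sub t |>.const_mul z).exp
  refine (he.mul ((hf.const_mul (c - z)).sub hf')).congr_deriv ?_
  simp only [Pi.sub_apply]
  linear_combination exp (z * (t - s)) * f s * hz

variable (hf : ∀ s, HasDerivAt f (f' s) s) (hf' : ∀ s, HasDerivAt f' (f'' s) s)
  (hf''c : Continuous f'') (g : HasExpGrowth a₁ a₂ f) (g' : HasExpGrowth a₁ a₂ f')
  (g'' : HasExpGrowth a₁ a₂ f'')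
include hf hf' hf''c g g' g''

lemma integral_Iic_green (hz : z ^ 2 - c * z - b = 0) (hza : z < a₁) :
    ∫ s in Iic t, exp (z * (t - s)) * (b * f s + c * f' s - f'' s) = (c - z) * f t - f' t := by
  have hfc : Continuous f := continuous_iff_continuousAt.2 fun s => (hf s).continuousAt
  have hf'c : Continuous f' := continuous_iff_continuousAt.2 fun s => (hf' s).continuousAt
  have hd := fun s => hasDerivAt_green_primitive (t := t) hz (hf s) (hf' s)
  rw [integral_Iic_of_hasDerivAt_of_tendsto (hd t).continuousAt.continuousWithinAt
    (fun s _ => hd s) (integrableOn_Iic_exp_mul_sub_mul (by fun_prop) hza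
      (((g.const_mul b).add (g'.const_mul c)).sub g'').1)
    (tendsto_exp_mul_sub_mul_atBot hza ((g.const_mul (c - z)).sub g').1)]
  simp

lemma integral_Ici_green (hz : z ^ 2 - c * z - b = 0) (hza : a₂ < z) :
    ∫ s in Ici t, exp (z * (t - s)) * (b * f s + c * f' s - f'' s) = f' t - (c - z) * f t := by
  have hfc : Continuous f := continuous_iff_continuousAt.2 fun s => (hf s).continuousAt
  have hf'c : Continuous f' := continuous_iff_continuousAt.2 fun s => (hf' s).continuousAt
  have hd := fun s => hasDerivAt_green_primitive (t := t) hz (hf s) (hf' s)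
  rw [integral_Ici_eq_integral_Ioi, integral_Ioi_of_hasDerivAt_of_tendsto
    (hd t).continuousAt.continuousWithinAt (fun s _ => hd s)
    ((integrableOn_Ici_exp_mul_sub_mul (by fun_prop) hza
      (((g.const_mul b).add (g'.const_mul c)).sub g'').2).mono_set Ioi_subset_Ici_self)
    (tendsto_exp_mul_sub_mul_atTop hza ((g.const_mul (c - z)).sub g').2)]
  simp

theorem greenOp_eq (hcb : 0 < c ^ 2 + 4 * b) (h₁ : zneg c b < a₁) (h₂ : a₂ < zpos c b) :
    greenOp c b (fun s => b * f s + c * f' s - f'' s) t = f t := by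
  have hne : zpos c b - zneg c b ≠ 0 := by rw [zpos_sub_zneg]; positivity
  unfold greenOp
  rw [integral_Iic_green hf hf' hf''c g g' g'' (zneg_root hcb.le) h₁,
    integral_Ici_green hf hf' hf''c g g' g'' (zpos_root hcb.le) h₂]
  field_simp
  ring

end Green

lemma hasDerivAt_exp_const_mul (k s : ℝ) :
    HasDerivAt (fun s => exp (k * s)) (k * exp (k * s)) s := by
  simpa [mul_comm] using ((hasDerivAt_id s).const_mul k).exp

lemma hasExpGrowth_exp_sub_exp {k₁ k₂ : ℝ} (hk : k₁ ≤ k₂) (A B : ℝ) :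
    HasExpGrowth k₁ k₂ (fun s => A * exp (k₁ * s) - B * exp (k₂ * s)) :=
  (((hasExpGrowth_exp k₁).mono le_rfl hk).const_mul A).sub
    (((hasExpGrowth_exp k₂).mono hk le_rfl).const_mul B)

theorem greenOp_exp_sub_exp {c b k₁ k₂ : ℝ} (hcb : 0 < c ^ 2 + 4 * b) (h₁ : zneg c b < k₁)
    (hk : k₁ ≤ k₂) (h₂ : k₂ < zpos c b) (M t : ℝ) :
    greenOp c b (fun s => (b + c * k₁ - k₁ ^ 2) * exp (k₁ * s) -
      M * (b + c * k₂ - k₂ ^ 2) * exp (k₂ * s)) t = exp (k₁ * t) - M * exp (k₂ * t) := by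
  have e₁ := hasDerivAt_exp_const_mul k₁
  have e₂ := hasDerivAt_exp_const_mul k₂
  have := greenOp_eq (t := t) (f := fun s => 1 * exp (k₁ * s) - M * exp (k₂ * s))
    (f' := fun s => k₁ * exp (k₁ * s) - (M * k₂) * exp (k₂ * s))
    (f'' := fun s => k₁ ^ 2 * exp (k₁ * s) - (M * k₂ ^ 2) * exp (k₂ * s))
    (fun s => (((e₁ s).const_mul 1).sub ((e₂ s).const_mul M)).congr_deriv (by ring))
    (fun s => (((e₁ s).const_mul k₁).sub ((e₂ s).const_mul (M * k₂))).congr_deriv (by ring))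
    (by fun_prop) (hasExpGrowth_exp_sub_exp hk _ _) (hasExpGrowth_exp_sub_exp hk _ _)
    (hasExpGrowth_exp_sub_exp hk _ _) hcb h₁ h₂
  convert this using 3 <;> ring

lemma hasExpGrowth_of_hasDerivAt_eq {c β : ℝ} {v h : ℝ → ℝ} (hc : 0 < c)
    (hv : ∀ s, HasDerivAt v (c * v s - h s) s) (hv0 : ∀ s, 0 ≤ v s) (h0 : ∀ s, 0 ≤ h s)
    (hβ : ∀ s, h s ≤ β) : HasExpGrowth 0 c v := by
  have he := hasDerivAt_exp_const_mul (-c)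
  have hW : Monotone fun u => exp (-c * u) * (v u - β / c) := by
    refine monotone_of_hasDerivAt_nonneg (fun u => (he u).mul ((hv u).sub_const (β / c)))
      fun u => ?_
    have : -c * exp (-c * u) * (v u - β / c) + exp (-c * u) * (c * v u - h u) =
        exp (-c * u) * (β - h u) := by field_simp; ring
    simpa only [Pi.zero_apply, this] using mul_nonneg (exp_pos _).le (sub_nonneg.2 (hβ u))
  have hV : Antitone fun u => exp (-c * u) * v u := by
    refine antitone_of_hasDerivAt_nonpos (fun u => (he u).mul (hv u)) fun u => ?_
    have : -c * exp (-c * u) * v u + exp (-c * u) * (c * v u - h u) = -(exp (-c * u) * h u) := by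
      ring
    simpa only [Pi.zero_apply, this, neg_nonpos] using mul_nonneg (exp_pos _).le (h0 u)
  have hinv : ∀ u, exp (c * u) * exp (-c * u) = 1 := fun u => by rw [← exp_add]; simp
  constructor
  · refine IsBigO.of_bound (β / c + |v 0 - β / c|) ?_
    filter_upwards [eventually_le_atBot 0] with u hu
    have h1 := mul_le_mul_of_nonneg_left (hW hu) (exp_pos (c * u)).le
    have h2 : exp (c * u) ≤ 1 := exp_le_one_iff.2 (by nlinarith)
    simp only [mul_zero, exp_zero, one_mul, ← mul_assoc, hinv] at h1
    rw [norm_of_nonneg (hv0 u), zero_mul, exp_zero, norm_one, mul_one]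
    nlinarith [le_abs_self (v 0 - β / c), abs_nonneg (v 0 - β / c), exp_pos (c * u)]
  · refine IsBigO.of_bound (v 0) ?_
    filter_upwards [eventually_ge_atTop 0] with u hu
    have h1 := mul_le_mul_of_nonneg_left (hV hu) (exp_pos (c * u)).le
    simp only [mul_zero, exp_zero, one_mul, ← mul_assoc, hinv] at h1
    rw [norm_of_nonneg (hv0 u), norm_of_nonneg (exp_pos _).le]
    linarith

section Gbeta

variable {β b u v κ : ℝ}

lemma gbeta_of_le (h : u ≤ β) : gbeta β u = u := if_pos h

lemma gbeta_nonneg (hu : 0 ≤ u) : 0 ≤ gbeta β u := by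
  unfold gbeta; split_ifs <;> simp [hu]

lemma gbeta_le_self (hu : 0 ≤ u) : gbeta β u ≤ u := by
  unfold gbeta; split_ifs <;> grind

lemma gbeta_le (hβ : 0 ≤ β) : gbeta β u ≤ β := by
  unfold gbeta; split_ifs <;> grind

lemma lipschitzWith_gbeta (hβ : 0 ≤ β) : LipschitzWith 1 (gbeta β) := by
  refine LipschitzWith.of_dist_le_mul fun u v => ?_
  simp only [NNReal.coe_one, one_mul, dist_eq_norm, norm_eq_abs, abs_le]
  unfold gbeta
  constructor <;> split_ifs <;> grind

lemma continuous_gbeta (hβ : 0 ≤ β) : Continuous (gbeta β) :=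
  (lipschitzWith_gbeta hβ).continuous

lemma monotone_mul_add_gbeta (hβ : 0 ≤ β) (hb : 1 ≤ b) :
    Monotone fun u => b * u + gbeta β u := by
  intro u v huv
  have := (abs_le.1 ((lipschitzWith_gbeta hβ).dist_le_mul v u)).1
  simp only [NNReal.coe_one, one_mul, dist_eq_norm, norm_eq_abs, abs_of_nonneg (sub_nonneg.2 huv)]
    at this
  nlinarith

lemma mul_add_gbeta_mul_nonneg (hb : 0 ≤ b) (hu : 0 ≤ u) (hκ : κ ≤ b + 1) :
    0 ≤ b * u + gbeta β u * (1 - κ) := by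
  have h0 := gbeta_nonneg (β := β) hu
  have h1 := gbeta_le_self (β := β) hu
  rcases le_total κ 1 with h | h <;> nlinarith

lemma mul_add_gbeta_mul_le (hβ : 0 ≤ β) (hb : 1 ≤ b) (hu : 0 ≤ u) (huv : u ≤ v) (hκ : 0 ≤ κ) :
    b * u + gbeta β u * (1 - κ) ≤ b * v + gbeta β v := by
  have hmono : b * u + gbeta β u ≤ b * v + gbeta β v := monotone_mul_add_gbeta hβ hb huv
  nlinarith [gbeta_nonneg (β := β) hu]

end Gbeta

lemma greenIntegrable_of_abs_le {c b C : ℝ} {h : ℝ → ℝ} (hb : 0 < b) (hc : Continuous h)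
    (hh : ∀ s, |h s| ≤ C) : GreenIntegrable c b h :=
  (hasExpGrowth_of_abs_le hh).greenIntegrable hc (zneg_neg hb) (zpos_pos hb)

theorem greenOp_mul_add_gbeta_eq {c β b C : ℝ} {φ : ℝ → ℝ} (hc : 0 < c) (hb : 0 < b)
    (hβ : 0 ≤ β) (hφC : ContDiff ℝ 2 φ) (hmono : Monotone φ)
    (heq : ∀ t, deriv (deriv φ) t - c * deriv φ t + gbeta β (φ t) = 0)
    (hφ0 : ∀ s, 0 ≤ φ s) (hφ : ∀ s, φ s ≤ C) (t : ℝ) :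
    greenOp c b (fun s => b * φ s + gbeta β (φ s)) t = φ t := by
  have hφd : ∀ s, HasDerivAt φ (deriv φ s) s :=
    fun s => (hφC.differentiable (by norm_num) s).hasDerivAt
  have hv' : deriv (deriv φ) = fun s => c * deriv φ s - gbeta β (φ s) :=
    funext fun s => by linarith [heq s]
  have hvd : ∀ s, HasDerivAt (deriv φ) (c * deriv φ s - gbeta β (φ s)) s := fun s => by
    simpa only [hv'] using (hφC.differentiable_deriv_two s).hasDerivAt
  have hg : ∀ s, |gbeta β (φ s)| ≤ β :=
    fun s => abs_le.2 ⟨by linarith [gbeta_nonneg (β := β) (hφ0 s)], gbeta_le hβ⟩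
  have gv : HasExpGrowth 0 c (deriv φ) :=
    hasExpGrowth_of_hasDerivAt_eq hc hvd (fun _ => hmono.deriv_nonneg)
      (fun s => gbeta_nonneg (hφ0 s)) (fun _ => gbeta_le hβ)
  have gφ : HasExpGrowth 0 c φ :=
    (hasExpGrowth_of_abs_le fun s => abs_le.2 ⟨by linarith [hφ0 s, hφ0 0, hφ s], hφ s⟩).mono
      le_rfl hc.le
  have hgc : Continuous fun s => gbeta β (φ s) :=
    (continuous_gbeta hβ).comp hφC.continuous
  have := greenOp_eq (t := t) hφd hvd
    ((continuous_const.mul (hφC.continuous_deriv (by norm_num))).sub hgc) gφ gv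
    ((gv.const_mul c).sub ((hasExpGrowth_of_abs_le hg).mono le_rfl hc.le)) (by positivity)
    (zneg_neg hb) (lt_zpos hb)
  rw [← this]
  congr 1
  funext s
  ring

section Conv

variable {K φ ψ : ℝ → ℝ}

lemma conv_nonneg (hK0 : ∀ᵐ s, 0 ≤ K s) (hφ0 : ∀ u, 0 ≤ φ u) (t : ℝ) : 0 ≤ conv K φ t :=
  integral_nonneg_of_ae (by filter_upwards [hK0] with s hs using mul_nonneg hs (hφ0 _))

lemma conv_le_conv (hK0 : ∀ᵐ s, 0 ≤ K s) (hφ0 : ∀ u, 0 ≤ φ u) (hle : ∀ u, φ u ≤ ψ u) {t : ℝ}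
    (hψ : Integrable fun s => K s * ψ (t - s)) : conv K φ t ≤ conv K ψ t :=
  integral_mono_of_nonneg (by filter_upwards [hK0] with s hs using mul_nonneg hs (hφ0 _)) hψ
    (by filter_upwards [hK0] with s hs using mul_le_mul_of_nonneg_left (hle _) hs)

lemma conv_le_of_le_const (hKi : Integrable K) (hK0 : ∀ᵐ s, 0 ≤ K s) (hK1 : ∫ s, K s = 1)
    (hφ0 : ∀ u, 0 ≤ φ u) {C : ℝ} (hφ : ∀ u, φ u ≤ C) (t : ℝ) : conv K φ t ≤ C := by
  have := conv_le_conv hK0 hφ0 hφ (t := t) (hKi.mul_const C)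
  unfold conv at this ⊢
  rwa [integral_mul_const, hK1, one_mul] at this

lemma integrable_exp_mul_of_hasCompactSupport (hKi : Integrable K) (hKs : HasCompactSupport K)
    (k : ℝ) : Integrable fun s => exp (k * s) * K s := by
  have : IntegrableOn (fun s => K s * exp (k * s)) (tsupport K) :=
    hKi.integrableOn.mul_continuousOn (by fun_prop) hKs
  simpa only [mul_comm] using this.integrable_of_forall_notMem_eq_zero
    fun s hs => by simp [image_eq_zero_of_notMem_tsupport hs]

lemma conv_le_of_le_exp (hKi : Integrable K) (hK0 : ∀ᵐ s, 0 ≤ K s) (hKs : HasCompactSupport K)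
    (hφ0 : ∀ u, 0 ≤ φ u) {L ε : ℝ} (hφ : ∀ u, φ u ≤ L * exp (ε * u)) (t : ℝ) :
    conv K φ t ≤ L * (∫ s, exp (-ε * s) * K s) * exp (ε * t) := by
  have heq : (fun s => K s * (L * exp (ε * (t - s)))) =
      fun s => L * exp (ε * t) * (exp (-ε * s) * K s) := by
    funext s; rw [show ε * (t - s) = ε * t + -ε * s by ring, exp_add]; ring
  have := conv_le_conv hK0 hφ0 hφ (t := t)
    (heq ▸ (integrable_exp_mul_of_hasCompactSupport hKi hKs (-ε)).const_mul _)
  unfold conv at this ⊢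
  rw [heq, integral_const_mul] at this
  linarith

lemma continuous_conv (hKi : Integrable K) (hφ : Continuous φ) {C : ℝ} (hC : ∀ u, |φ u| ≤ C) :
    Continuous (conv K φ) :=
  BddAbove.continuous_convolution_right_of_integrable (ContinuousLinearMap.mul ℝ ℝ)
    ⟨C, by rintro _ ⟨u, rfl⟩; exact hC u⟩ hKi hφ

end Conv

/-- The sub-solution inequality at a point `s`, read with `u = φ(s)`, `κ = (K*φ)(s)`,
`w = e^{λs}(1 - Me^{εs})`, `e = e^{λs}`, `x = e^{εs}`, `A = L ∫ e^{-εs}K(s) ds`, `m = -Mχ(λ+ε)`. -/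
lemma sub_mul_le_mul_add_gbeta_mul {b β u κ w e x A m : ℝ} (hb : 0 ≤ b) (hu : 0 ≤ u)
    (hwu : w ≤ u) (hwe : w ≤ e) (he : 0 ≤ e) (hx : 0 ≤ x) (hκ0 : 0 ≤ κ) (hκ : κ ≤ b + 1)
    (hκA : κ ≤ A * x) (hA : 0 ≤ A) (hAm : A ≤ m) (hβ : 0 < w → u ≤ β) :
    (b + 1) * w - m * (e * x) ≤ b * u + gbeta β u * (1 - κ) := by
  rcases le_or_gt w 0 with hw | hw
  · nlinarith [mul_add_gbeta_mul_nonneg (β := β) hb hu hκ,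
      mul_nonneg (hA.trans hAm) (mul_nonneg he hx)]
  · rw [gbeta_of_le (hβ hw)]
    nlinarith [mul_nonneg (sub_nonneg.2 hκ) (sub_nonneg.2 hwu),
      mul_nonneg (sub_nonneg.2 hwe) hκ0, mul_nonneg he (sub_nonneg.2 hκA),
      mul_nonneg (sub_nonneg.2 hAm) (mul_nonneg he hx)]

section Rop

variable {K φ : ℝ → ℝ} {β b : ℝ}

lemma rop_nonneg (hKi : Integrable K) (hK0 : ∀ᵐ s, 0 ≤ K s) (hK1 : ∫ s, K s = 1)
    (hb : 0 ≤ b) (hβb : 2 * β ≤ b + 1) (hφ0 : ∀ s, 0 ≤ φ s) (hφ : ∀ s, φ s ≤ 2 * β) (s : ℝ) :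
    0 ≤ rop K β b φ s :=
  mul_add_gbeta_mul_nonneg hb (hφ0 s) ((conv_le_of_le_const hKi hK0 hK1 hφ0 hφ s).trans hβb)

lemma rop_le (hK0 : ∀ᵐ s, 0 ≤ K s) (hβ : 0 ≤ β) (hb : 1 ≤ b) (hφ0 : ∀ s, 0 ≤ φ s) {s v : ℝ}
    (hv : φ s ≤ v) : rop K β b φ s ≤ b * v + gbeta β v :=
  mul_add_gbeta_mul_le hβ hb (hφ0 s) hv (conv_nonneg hK0 hφ0 s)

lemma greenIntegrable_rop {c : ℝ} (hKi : Integrable K) (hK0 : ∀ᵐ s, 0 ≤ K s)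
    (hK1 : ∫ s, K s = 1) (hβ : 0 ≤ β) (hb : 1 ≤ b) (hβb : 2 * β ≤ b + 1) (hφc : Continuous φ)
    (hφ0 : ∀ s, 0 ≤ φ s) (hφ : ∀ s, φ s ≤ 2 * β) : GreenIntegrable c b (rop K β b φ) := by
  have hφabs : ∀ s, |φ s| ≤ 2 * β := fun s => abs_le.2 ⟨by linarith [hφ0 s], hφ s⟩
  have hr0 := rop_nonneg hKi hK0 hK1 (by linarith) hβb hφ0 hφ
  refine greenIntegrable_of_abs_le (C := b * (2 * β) + β) (by linarith) ?_ fun s => abs_le.2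
    ⟨by nlinarith [hr0 s], (rop_le hK0 hβ hb hφ0 (hφ s)).trans
      (by nlinarith [gbeta_le (u := 2 * β) hβ])⟩
  exact (continuous_const.mul hφc).add (((continuous_gbeta hβ).comp hφc).mul
    (continuous_const.sub (continuous_conv hKi hφc hφabs)))

end Rop

lemma le_mul_exp_of_isLUB {f : ℝ → ℝ} {ε L : ℝ}
    (hL : IsLUB (range fun t => f t * exp (-ε * t)) L) (s : ℝ) : f s ≤ L * exp (ε * s) := by
  have := mul_le_mul_of_nonneg_right (hL.1 ⟨s, rfl⟩) (exp_pos (ε * s)).le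
  rwa [mul_assoc, ← exp_add, neg_mul, neg_add_cancel, exp_zero, mul_one] at this

lemma lt_of_mul_exp_lt_one {M ε T s : ℝ} (hM : 0 < M) (hε : 0 < ε)
    (hT : M * exp (ε * T) = 1) (hs : M * exp (ε * s) < 1) : s < T := by
  rw [← hT] at hs
  exact lt_of_mul_lt_mul_left (exp_lt_exp.1 (lt_of_mul_lt_mul_left hs hM.le)) hε.le

section Solutions

variable {K φ ψ : ℝ → ℝ} {c β b : ℝ}

theorem greenOp_rop_le_wave (hKi : Integrable K) (hK0 : ∀ᵐ s, 0 ≤ K s) (hK1 : ∫ s, K s = 1)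
    (hc : 0 < c) (hβ : 0 ≤ β) (hb : 1 ≤ b) (hβb : 2 * β ≤ b + 1) (hψC : ContDiff ℝ 2 ψ)
    (hψmono : Monotone ψ) (hψeq : ∀ t, deriv (deriv ψ) t - c * deriv ψ t + gbeta β (ψ t) = 0)
    (hψ0 : ∀ s, 0 ≤ ψ s) (hψ : ∀ s, ψ s ≤ 2 * β) (hφc : Continuous φ) (hφ0 : ∀ s, 0 ≤ φ s)
    (hφψ : ∀ s, φ s ≤ ψ s) (t : ℝ) : greenOp c b (rop K β b φ) t ≤ ψ t := by
  have hψabs : ∀ s, |b * ψ s + gbeta β (ψ s)| ≤ b * (2 * β) + β := fun s => by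
    have := gbeta_nonneg (β := β) (hψ0 s)
    rw [abs_of_nonneg (by nlinarith [hψ0 s])]
    nlinarith [gbeta_le (u := ψ s) hβ, hψ s]
  rw [← greenOp_mul_add_gbeta_eq hc (by linarith) hβ hψC hψmono hψeq hψ0 hψ t]
  exact greenOp_mono
    (greenIntegrable_rop hKi hK0 hK1 hβ hb hβb hφc hφ0 fun s => (hφψ s).trans (hψ s))
    (greenIntegrable_of_abs_le (by linarith) ((continuous_const.mul hψC.continuous).add
      ((continuous_gbeta hβ).comp hψC.continuous)) hψabs)
    (fun s => rop_le hK0 hβ hb hφ0 (hφψ s)) t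

theorem exp_mul_one_sub_le_greenOp_rop {ε L M : ℝ} (hKi : Integrable K)
    (hK0 : ∀ᵐ s, 0 ≤ K s) (hK1 : ∫ s, K s = 1) (hKs : HasCompactSupport K) (hc : 2 ≤ c)
    (hβ : 0 ≤ β) (hb : 1 ≤ b) (hβb : 2 * β ≤ b + 1) (hε : 0 ≤ ε) (hεz : lam c + ε < zpos c b)
    (hL : 0 ≤ L) (hM : 0 ≤ M) (hLM : L * ∫ s, exp (-ε * s) * K s ≤ -(M * chi c (lam c + ε)))
    (hφc : Continuous φ) (hφ0 : ∀ s, 0 ≤ φ s) (hφ : ∀ s, φ s ≤ 2 * β)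
    (hφL : ∀ s, φ s ≤ L * exp (ε * s))
    (hwφ : ∀ s, exp (lam c * s) * (1 - M * exp (ε * s)) ≤ φ s)
    (hβφ : ∀ s, 0 < exp (lam c * s) * (1 - M * exp (ε * s)) → φ s ≤ β) (t : ℝ) :
    exp (lam c * t) * (1 - M * exp (ε * t)) ≤ greenOp c b (rop K β b φ) t := by
  set k := lam c + ε with hk
  have hsplit : ∀ s, exp (k * s) = exp (lam c * s) * exp (ε * s) := fun s => by
    rw [← exp_add, hk]; ring_nf
  have hA0 : 0 ≤ L * ∫ s, exp (-ε * s) * K s := mul_nonneg hL <| integral_nonneg_of_ae <| by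
    filter_upwards [hK0] with s hs using mul_nonneg (exp_pos _).le hs
  have hwe : ∀ s, exp (lam c * s) * (1 - M * exp (ε * s)) ≤ exp (lam c * s) := fun s => by
    nlinarith [mul_nonneg (exp_pos (lam c * s)).le (mul_nonneg hM (exp_pos (ε * s)).le)]
  have hq : ∀ s, (b + c * lam c - lam c ^ 2) * exp (lam c * s) -
      M * (b + c * k - k ^ 2) * exp (k * s) ≤ rop K β b φ s := fun s => by
    have hχ := chi_lam hc
    unfold chi at hχ
    calc _ = (b + 1) * (exp (lam c * s) * (1 - M * exp (ε * s))) -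
          -(M * chi c k) * (exp (lam c * s) * exp (ε * s)) := by
          rw [hsplit]; unfold chi; linear_combination (-exp (lam c * s)) * hχ
      _ ≤ _ := sub_mul_le_mul_add_gbeta_mul (by linarith) (hφ0 s) (hwφ s) (hwe s)
          (exp_pos _).le (exp_pos _).le
          (conv_nonneg hK0 hφ0 s) ((conv_le_of_le_const hKi hK0 hK1 hφ0 hφ s).trans hβb)
          (conv_le_of_le_exp hKi hK0 hKs hφ0 hφL s) hA0 hLM (hβφ s)
  have hzlam : zneg c b < lam c := (zneg_neg (by linarith)).trans (lam_pos (by linarith))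
  calc exp (lam c * t) * (1 - M * exp (ε * t)) = exp (lam c * t) - M * exp (k * t) := by
        rw [hsplit]; ring
    _ = _ := (greenOp_exp_sub_exp (by nlinarith) hzlam (by linarith) hεz M t).symm
    _ ≤ _ := greenOp_mono ((hasExpGrowth_exp_sub_exp (by linarith) (b + c * lam c - lam c ^ 2)
        (M * (b + c * k - k ^ 2))).greenIntegrable (by fun_prop) hzlam hεz)
        (greenIntegrable_rop hKi hK0 hK1 hβ hb hβb hφc hφ0 hφ) hq t

end Solutions

theorem Am_sub_and_super_solution_general
    (K : ℝ → ℝ) (hKi : Integrable K)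
    (hK0 : ∀ᵐ s ∂(volume : Measure ℝ), 0 ≤ K s)
    (hK1 : (∫ s, K s) = 1) (hKsupp : HasCompactSupport K)
    (c β b : ℝ) (hc : 2 < c) (hβ : 1 < β) (hb : 2 * β + 2 < b)
    (φp : ℝ → ℝ) (hφpC : ContDiff ℝ 2 φp) (hφpMono : StrictMono φp)
    (hφpEq : ∀ t, deriv (deriv φp) t - c * deriv φp t + gbeta β (φp t) = 0)
    (hφpBot : Tendsto φp atBot (nhds 0))
    (hφpTop : Tendsto φp atTop (nhds (2 * β)))
    (ε : ℝ) (hε0 : 0 < ε) (heps2 : lam c + ε < mup c)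
    (L : ℝ) (hL : IsLUB (Set.range fun t => φp t * Real.exp (-ε * t)) L)
    (M : ℝ) (hM : 0 < M)
    (hMcond : (L / M) * (∫ s, Real.exp (-ε * s) * K s) < -(chi c (lam c + ε)))
    (φm : ℝ → ℝ)
    (hφm : ∀ t, φm t = max 0 (Real.exp (lam c * t) * (1 - M * Real.exp (ε * t))))
    (Tc : ℝ) (hTc : M * Real.exp (ε * Tc) = 1)
    (horder : ∀ t, t < Tc →
      0 < φm t ∧ φm t < φp t ∧ φp t < Real.exp (ε * t) ∧ Real.exp (ε * t) < 1) :
    ∀ φ : ℝ → ℝ, Continuous φ → (∀ t, φm t ≤ φ t ∧ φ t ≤ φp t) →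
      ∀ t, φm t ≤ Am K c β b φ t ∧ Am K c β b φ t ≤ φp t := by
  intro φ hφc hφb t
  have hφp0 : ∀ s, 0 ≤ φp s := hφpMono.monotone.le_of_tendsto hφpBot
  have hφp2β : ∀ s, φp s ≤ 2 * β := hφpMono.monotone.ge_of_tendsto hφpTop
  have hφmφ : ∀ s, max 0 (exp (lam c * s) * (1 - M * exp (ε * s))) ≤ φ s :=
    fun s => hφm s ▸ (hφb s).1
  have hφ0 : ∀ s, 0 ≤ φ s := fun s => (le_max_left _ _).trans (hφmφ s)
  have hφ2β : ∀ s, φ s ≤ 2 * β := fun s => (hφb s).2.trans (hφp2β s)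
  have hL0 : 0 ≤ L := (mul_nonneg (hφp0 0) (exp_pos _).le).trans (hL.1 ⟨0, rfl⟩)
  have hLM : L * ∫ s, exp (-ε * s) * K s ≤ -(M * chi c (lam c + ε)) := by
    rw [div_mul_eq_mul_div, div_lt_iff₀ hM] at hMcond
    linarith
  have hβφ : ∀ s, 0 < exp (lam c * s) * (1 - M * exp (ε * s)) → φ s ≤ β := fun s hs => by
    obtain ⟨-, -, h₁, h₂⟩ := horder s <| lt_of_mul_exp_lt_one hM hε0 hTc <| by
      linarith [pos_of_mul_pos_right hs (exp_pos _).le]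
    linarith [(hφb s).2]
  rw [Am_eq_greenOp, hφm]
  refine ⟨max_le (greenOp_nonneg (rop_nonneg hKi hK0 hK1 (by linarith) (by linarith) hφ0 hφ2β) t)
    (exp_mul_one_sub_le_greenOp_rop hKi hK0 hK1 hKsupp hc.le (by linarith) (by linarith)
      (by linarith) hε0.le (heps2.trans (mup_lt_zpos (by linarith))) hL0 hM.le hLM hφc hφ0 hφ2β
      (fun s => (hφb s).2.trans (le_mul_exp_of_isLUB hL s))
      (fun s => (le_max_right _ _).trans (hφmφ s)) hβφ t), ?_⟩
  exact greenOp_rop_le_wave hKi hK0 hK1 (by linarith) (by linarith) (by linarith) (by linarith)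
    hφpC hφpMono.monotone hφpEq hφp0 hφp2β hφc hφ0 (fun s => (hφb s).2) t

/-- sub- and super-solution property of the pair `(φ₋, φ₊)` for
the operator `A_m`, for `c > 2` and compactly supported kernel. -/
theorem Am_sub_and_super_solution
    (K : ℝ → ℝ) (hKi : Integrable K)
    (hK0 : ∀ᵐ s ∂(volume : Measure ℝ), 0 ≤ K s)
    (hK1 : (∫ s, K s) = 1) (hKsupp : HasCompactSupport K)
    (c β b : ℝ) (hc : 2 < c) (hβ : 1 < β) (hb : 2 * β + 2 < b)
    (φp : ℝ → ℝ) (hφpC : ContDiff ℝ 2 φp) (hφpMono : StrictMono φp)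
    (hφpEq : ∀ t, deriv (deriv φp) t - c * deriv φp t + gbeta β (φp t) = 0)
    (hφpBot : Tendsto φp atBot (nhds 0))
    (hφpTop : Tendsto φp atTop (nhds (2 * β)))
    (ε : ℝ) (hε0 : 0 < ε) (heps1 : ε < lam c) (heps2 : lam c + ε < mup c)
    (L : ℝ) (hL : IsLUB (Set.range fun t => φp t * Real.exp (-ε * t)) L)
    (M : ℝ) (hM : 0 < M)
    (hMcond : (L / M) * (∫ s, Real.exp (-ε * s) * K s) < -(chi c (lam c + ε)))
    (φm : ℝ → ℝ)
    (hφm : ∀ t, φm t = max 0 (Real.exp (lam c * t) * (1 - M * Real.exp (ε * t))))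
    (Tc : ℝ) (hTc : M * Real.exp (ε * Tc) = 1)
    (horder : ∀ t, t < Tc →
      0 < φm t ∧ φm t < φp t ∧ φp t < Real.exp (ε * t) ∧ Real.exp (ε * t) < 1) :
    ∀ φ : ℝ → ℝ, Continuous φ → (∀ t, φm t ≤ φ t ∧ φ t ≤ φp t) →
      ∀ t, φm t ≤ Am K c β b φ t ∧ Am K c β b φ t ≤ φp t :=
  Am_sub_and_super_solution_general K hKi hK0 hK1 hKsupp c β b hc hβ hb φp hφpC hφpMono hφpEq hφpBot
    hφpTop ε hε0 heps2 L hL M hM hMcond φm hφm Tc hTc horder
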